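/- Fix reals β ≥ 0 and 0 < α ≤ 2 with 2β + 2 - α = 0. As Ξ → ∞, the integral of x₁^β x₂^β (x₁^α + x₂^α)^{-1} over the region {x₁x₂ ≤ Ξ, x₁ ≥ 1, x₂ ≥ 1} is bounded above and below by positive constant multiples of log Ξ. -/

import Mathlib

/-!
The constraints force `β = 0` and `α = 2`, so the integrand is `(x² + y²)⁻¹`. Integrating
first in `y ∈ [1, Ξ/x]` gives `x⁻¹ (arctan (Ξ/x²) - arctan (1/x))`, which lies between `0` and
`π/(2x)`, and is at least `π/(4x) - 1/x²` for `x ≤ √Ξ` because then `Ξ/x² ≥ 1`. Integrating over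
`x ∈ [1, Ξ]` gives `(π/8) log Ξ - 1 ≤ ∫ ≤ (π/2) log Ξ`.
-/

open MeasureTheory Set Real

section RegionIntegral

variable {α β E : Type*} [MeasurableSpace α] [MeasurableSpace β] {μ : Measure α} {ν : Measure β}
  [NormedAddCommGroup E] [NormedSpace ℝ E] {f : α × β → E} {s : Set α} {t : α → Set β}

lemma integral_indicator_region_prodMk (hS : MeasurableSet {p : α × β | p.1 ∈ s ∧ p.2 ∈ t p.1})
    (x : α) :
    ∫ y, {p : α × β | p.1 ∈ s ∧ p.2 ∈ t p.1}.indicator f (x, y) ∂ν =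
      s.indicator (fun x => ∫ y in t x, f (x, y) ∂ν) x := by
  by_cases hx : x ∈ s
  · have ht : MeasurableSet (t x) := by
      simpa [hx] using hS.preimage (measurable_prodMk_left (x := x))
    rw [indicator_of_mem hx, ← integral_indicator ht]
    congr 1 with y
    by_cases hy : y ∈ t x <;> simp [indicator, hx, hy]
  · simp [indicator, hx]

theorem setIntegral_region_eq_setIntegral_setIntegral [SFinite μ] [SFinite ν]
    (hs : MeasurableSet s) (hS : MeasurableSet {p : α × β | p.1 ∈ s ∧ p.2 ∈ t p.1})
    (hf : IntegrableOn f {p : α × β | p.1 ∈ s ∧ p.2 ∈ t p.1} (μ.prod ν)) :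
    ∫ p in {p : α × β | p.1 ∈ s ∧ p.2 ∈ t p.1}, f p ∂(μ.prod ν) =
      ∫ x in s, ∫ y in t x, f (x, y) ∂ν ∂μ := by
  rw [← integral_indicator hS, integral_prod _ (hf.integrable_indicator hS),
    ← integral_indicator hs]
  simp_rw [integral_indicator_region_prodMk hS]

end RegionIntegral

def hyperbolicRegion (Ξ : ℝ) : Set (ℝ × ℝ) := {p | 1 ≤ p.1 ∧ 1 ≤ p.2 ∧ p.1 * p.2 ≤ Ξ}

lemma measurableSet_hyperbolicRegion (Ξ : ℝ) : MeasurableSet (hyperbolicRegion Ξ) :=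
  (measurableSet_le measurable_const measurable_fst).inter <|
    (measurableSet_le measurable_const measurable_snd).inter <|
      measurableSet_le (measurable_fst.mul measurable_snd) measurable_const

lemma hyperbolicRegion_eq (Ξ : ℝ) :
    hyperbolicRegion Ξ = {p : ℝ × ℝ | p.1 ∈ Icc 1 Ξ ∧ p.2 ∈ Icc 1 (Ξ / p.1)} := by
  ext ⟨x, y⟩
  simp only [hyperbolicRegion, mem_ofPred_eq, mem_Icc]
  constructor
  · rintro ⟨hx, hy, hxy⟩
    exact ⟨⟨hx, by nlinarith⟩, hy, by rwa [le_div_iff₀ (by positivity), mul_comm]⟩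
  · rintro ⟨⟨hx, -⟩, hy, hyΞ⟩
    exact ⟨hx, hy, by rwa [le_div_iff₀ (by positivity), mul_comm] at hyΞ⟩

lemma hyperbolicRegion_subset (Ξ : ℝ) : hyperbolicRegion Ξ ⊆ Icc 1 Ξ ×ˢ Icc 1 Ξ := by
  rintro ⟨x, y⟩ ⟨hx, hy, hxy⟩
  exact ⟨⟨hx, by nlinarith⟩, hy, by nlinarith⟩

lemma integrableOn_inv_sq_add_sq_hyperbolicRegion (Ξ : ℝ) :
    IntegrableOn (fun p : ℝ × ℝ => (p.1 ^ 2 + p.2 ^ 2)⁻¹) (hyperbolicRegion Ξ) := by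
  refine IntegrableOn.mono_set ?_ (hyperbolicRegion_subset Ξ)
  refine ContinuousOn.integrableOn_compact (isCompact_Icc.prod isCompact_Icc) ?_
  refine ContinuousOn.inv₀ (by fun_prop) fun p hp => ?_
  have : 1 ≤ p.1 := hp.1.1
  positivity

lemma Real.arctan_le_self {x : ℝ} (hx : 0 ≤ x) : arctan x ≤ x := by
  simpa only [tan_arctan] using le_tan (arctan_nonneg.2 hx) (arctan_lt_pi_div_two x)

/-- Closed form of `∫ y in 1..Ξ/x, (x ^ 2 + y ^ 2)⁻¹`, by `integral_inv_sq_add_sq`. -/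
noncomputable def innerIntegral (Ξ x : ℝ) : ℝ := x⁻¹ * (arctan (Ξ / x / x) - arctan (1 / x))

lemma innerIntegral_nonneg {Ξ x : ℝ} (hx : 0 < x) (hxΞ : x ≤ Ξ) : 0 ≤ innerIntegral Ξ x := by
  have h : arctan (1 / x) ≤ arctan (Ξ / x / x) :=
    arctan_le_arctan_iff.2 (div_le_div_of_nonneg_right ((one_le_div hx).2 hxΞ) hx.le)
  exact mul_nonneg (inv_nonneg.2 hx.le) (sub_nonneg.2 h)

lemma innerIntegral_le {Ξ x : ℝ} (hx : 0 < x) : innerIntegral Ξ x ≤ π / 2 * x⁻¹ := by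
  have h₁ := arctan_lt_pi_div_two (Ξ / x / x)
  have h₂ : 0 ≤ arctan (1 / x) := arctan_nonneg.2 (by positivity)
  rw [innerIntegral, mul_comm]
  exact mul_le_mul_of_nonneg_right (by linarith) (by positivity)

lemma le_innerIntegral {Ξ x : ℝ} (hx : 0 < x) (hxΞ : x ^ 2 ≤ Ξ) :
    π / 4 * x⁻¹ - (x ^ 2)⁻¹ ≤ innerIntegral Ξ x := by
  have h₁ : π / 4 ≤ arctan (Ξ / x / x) := by
    rw [← arctan_one, arctan_le_arctan_iff, div_div, le_div_iff₀ (by positivity)]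
    nlinarith
  have h₂ : arctan (1 / x) ≤ 1 / x := arctan_le_self (by positivity)
  calc π / 4 * x⁻¹ - (x ^ 2)⁻¹ = x⁻¹ * (π / 4 - 1 / x) := by field_simp
    _ ≤ innerIntegral Ξ x := mul_le_mul_of_nonneg_left (by linarith) (by positivity)

lemma intervalIntegrable_innerIntegral (Ξ : ℝ) {a b : ℝ} (ha : 0 < a) (hb : 0 < b) :
    IntervalIntegrable (innerIntegral Ξ) volume a b := by
  have : ∀ x ∈ uIcc a b, x ≠ 0 := fun x hx => ((lt_min ha hb).trans_le hx.1).ne'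
  refine ContinuousOn.intervalIntegrable ?_
  unfold innerIntegral
  fun_prop (disch := assumption)

theorem integral_hyperbolicRegion {Ξ : ℝ} (hΞ : 1 ≤ Ξ) :
    ∫ p in hyperbolicRegion Ξ, (p.1 ^ 2 + p.2 ^ 2)⁻¹ = ∫ x in 1..Ξ, innerIntegral Ξ x := by
  have hf := integrableOn_inv_sq_add_sq_hyperbolicRegion Ξ
  have hS := measurableSet_hyperbolicRegion Ξ
  rw [hyperbolicRegion_eq, Measure.volume_eq_prod] at hf
  rw [hyperbolicRegion_eq] at hS ⊢
  rw [Measure.volume_eq_prod, setIntegral_region_eq_setIntegral_setIntegral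
    (t := fun x => Icc 1 (Ξ / x)) measurableSet_Icc hS hf, intervalIntegral.integral_of_le hΞ,
    ← integral_Icc_eq_integral_Ioc]
  refine setIntegral_congr_fun measurableSet_Icc fun x hx => ?_
  have hx0 : x ≠ 0 := by linarith [hx.1]
  have hxΞ : 1 ≤ Ξ / x := by rw [le_div_iff₀ (by linarith [hx.1])]; linarith [hx.2]
  rw [integral_Icc_eq_integral_Ioc, ← intervalIntegral.integral_of_le hxΞ,
    integral_inv_sq_add_sq hx0, innerIntegral]

theorem integral_innerIntegral_le {Ξ : ℝ} (hΞ : 1 ≤ Ξ) :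
    ∫ x in 1..Ξ, innerIntegral Ξ x ≤ π / 2 * log Ξ := by
  have hΞ0 : 0 < Ξ := by linarith
  have : ∀ x ∈ uIcc 1 Ξ, x ≠ 0 := fun x hx => ((lt_min one_pos hΞ0).trans_le hx.1).ne'
  calc ∫ x in 1..Ξ, innerIntegral Ξ x ≤ ∫ x in 1..Ξ, π / 2 * x⁻¹ :=
        intervalIntegral.integral_mono_on hΞ (intervalIntegrable_innerIntegral Ξ one_pos hΞ0)
          (ContinuousOn.intervalIntegrable (by fun_prop (disch := assumption)))
          fun x hx => innerIntegral_le (by linarith [hx.1])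
    _ = π / 2 * log Ξ := by
        rw [intervalIntegral.integral_const_mul, integral_inv_of_pos one_pos hΞ0, div_one]

theorem le_integral_innerIntegral {Ξ : ℝ} (hΞ : 1 ≤ Ξ) :
    π / 8 * log Ξ - 1 ≤ ∫ x in 1..Ξ, innerIntegral Ξ x := by
  have hΞ0 : 0 < Ξ := by linarith
  set σ := √Ξ
  have hσ1 : 1 ≤ σ := one_le_sqrt.2 hΞ
  have hσ0 : 0 < σ := by linarith
  have hσ2 : σ ^ 2 = Ξ := sq_sqrt hΞ0.le
  have hσΞ : σ ≤ Ξ := by nlinarith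
  have hne : ∀ x ∈ uIcc 1 σ, x ≠ 0 := fun x hx => ((lt_min one_pos hσ0).trans_le hx.1).ne'
  have hsq : ∀ x ∈ uIcc 1 σ, x ^ 2 ≠ 0 := fun x hx => pow_ne_zero 2 (hne x hx)
  have hhead : π / 4 * log σ + σ⁻¹ - 1 ≤ ∫ x in 1..σ, innerIntegral Ξ x := calc
    _ = ∫ x in 1..σ, π / 4 * x⁻¹ + -(x ^ 2)⁻¹ := by
        rw [intervalIntegral.integral_eq_sub_of_hasDerivAt
          (f := fun x => π / 4 * log x + x⁻¹)
          (fun x hx => ((hasDerivAt_log (hne x hx)).const_mul _).add (hasDerivAt_inv (hne x hx)))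
          (ContinuousOn.intervalIntegrable (by fun_prop (disch := assumption)))]
        simp
    _ ≤ ∫ x in 1..σ, innerIntegral Ξ x :=
        intervalIntegral.integral_mono_on hσ1
          (ContinuousOn.intervalIntegrable (by fun_prop (disch := assumption)))
          (intervalIntegrable_innerIntegral Ξ one_pos hσ0) fun x hx => by
            simpa only [sub_eq_add_neg] using le_innerIntegral (by linarith [hx.1])
              (hσ2 ▸ pow_le_pow_left₀ (by linarith [hx.1]) hx.2 2)
  have htail : 0 ≤ ∫ x in σ..Ξ, innerIntegral Ξ x :=
    intervalIntegral.integral_nonneg hσΞ fun x hx => innerIntegral_nonneg (by linarith [hx.1]) hx.2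
  have hlog : log σ = log Ξ / 2 := log_sqrt hΞ0.le
  have hσinv : 0 ≤ σ⁻¹ := by positivity
  rw [hlog] at hhead
  rw [← intervalIntegral.integral_add_adjacent_intervals
    (intervalIntegrable_innerIntegral Ξ one_pos hσ0) (intervalIntegrable_innerIntegral Ξ hσ0 hΞ0)]
  linarith

theorem integral_log_case_general (β α : ℝ) (hβ : 0 ≤ β) (hα2 : α ≤ 2)
    (hcrit : 2 * β + 2 - α = 0) :
    ∃ c C Ξ₀ : ℝ, 0 < c ∧ c ≤ C ∧ 0 < Ξ₀ ∧ ∀ Ξ : ℝ, Ξ₀ ≤ Ξ →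
      c * Real.log Ξ ≤
        (∫ x : ℝ × ℝ in {x | 1 ≤ x.1 ∧ 1 ≤ x.2 ∧ x.1 * x.2 ≤ Ξ},
          x.1 ^ β * x.2 ^ β * (x.1 ^ α + x.2 ^ α)⁻¹) ∧
      (∫ x : ℝ × ℝ in {x | 1 ≤ x.1 ∧ 1 ≤ x.2 ∧ x.1 * x.2 ≤ Ξ},
          x.1 ^ β * x.2 ^ β * (x.1 ^ α + x.2 ^ α)⁻¹) ≤
        C * Real.log Ξ := by
  obtain rfl : β = 0 := by linarith
  obtain rfl : α = 2 := by linarith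
  simp only [rpow_zero, one_mul, rpow_two]
  refine ⟨π / 16, π / 2, exp 6, by positivity, by linarith [pi_pos], exp_pos 6, fun Ξ hΞ => ?_⟩
  have hΞ1 : 1 ≤ Ξ := (one_le_exp (by norm_num)).trans hΞ
  have hlog : 6 ≤ log Ξ := (le_log_iff_exp_le (by linarith)).2 hΞ
  change _ ≤ ∫ p in hyperbolicRegion Ξ, _ ∧ ∫ p in hyperbolicRegion Ξ, _ ≤ _
  rw [integral_hyperbolicRegion hΞ1]
  refine ⟨?_, integral_innerIntegral_le hΞ1⟩
  nlinarith [le_integral_innerIntegral hΞ1, pi_gt_three]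

/-- For `β ≥ 0`, `0 < α ≤ 2` with `2β + 2 - α = 0`, the integral of
`x₁^β x₂^β (x₁^α + x₂^α)⁻¹` over `{(x₁,x₂) ∈ [1,∞)² : x₁x₂ ≤ Ξ}` is
`≍ log Ξ` as `Ξ → ∞`. -/
theorem integral_log_case (β α : ℝ) (hβ : 0 ≤ β) (hα0 : 0 < α) (hα2 : α ≤ 2)
    (hcrit : 2 * β + 2 - α = 0) :
    ∃ c C Ξ₀ : ℝ, 0 < c ∧ c ≤ C ∧ 0 < Ξ₀ ∧ ∀ Ξ : ℝ, Ξ₀ ≤ Ξ →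
      c * Real.log Ξ ≤
        (∫ x : ℝ × ℝ in {x | 1 ≤ x.1 ∧ 1 ≤ x.2 ∧ x.1 * x.2 ≤ Ξ},
          x.1 ^ β * x.2 ^ β * (x.1 ^ α + x.2 ^ α)⁻¹) ∧
      (∫ x : ℝ × ℝ in {x | 1 ≤ x.1 ∧ 1 ≤ x.2 ∧ x.1 * x.2 ≤ Ξ},
          x.1 ^ β * x.2 ^ β * (x.1 ^ α + x.2 ^ α)⁻¹) ≤
        C * Real.log Ξ :=
  integral_log_case_general β α hβ hα2 hcrit
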